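/- arXiv:1005.0518 — 7 statements merged into one kernel-verified Lean document; each statement's English description precedes it below -/
import Mathlib

section
/- Every function computable by a core-language command (i.e., every function f : ℕ^n → ℕ such that for each x, f(x) is the maximum value of some fixed output coordinate over all y with x ⟦C⟧ y) is primitive recursive. -/
/-- Expressions of the core language `L_r`. -/
inductive Expr (n : ℕ) where
  | zero : Expr n
  | var (i : Fin n) : Expr n
  | add (i j : Fin n) : Expr n
  | mul (i j : Fin n) : Expr n

/-- Commands of the core language `L_r`. -/
inductive Cmd (n : ℕ) where
  | skip : Cmd n
  | assign (l : Fin n) (e : Expr n) : Cmd n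
  | seq (c₁ c₂ : Cmd n) : Cmd n
  | choose (c₁ c₂ : Cmd n) : Cmd n
  | loop (l : Fin n) (c : Cmd n) : Cmd n

def Expr.eval {n : ℕ} : Expr n → (Fin n → ℕ) → ℕ
  | .zero, _ => 0
  | .var i, x => x i
  | .add i j, x => x i + x j
  | .mul i j, x => x i * x j

/-- `i`-fold iteration of a relation (`iterRel R 0` is the identity). -/
def iterRel {α : Type*} (R : α → α → Prop) : ℕ → α → α → Prop
  | 0, x, y => y = x
  | k + 1, x, z => ∃ y, R x y ∧ iterRel R k y z

/-- The (nondeterministic, exact-assignment) semantics `⟦C⟧ ⊆ ℕⁿ × ℕⁿ`. -/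
def Sem {n : ℕ} : Cmd n → (Fin n → ℕ) → (Fin n → ℕ) → Prop
  | .skip, x, y => y = x
  | .assign l e, x, y => y = Function.update x l (e.eval x)
  | .seq c₁ c₂, x, y => ∃ z, Sem c₁ x z ∧ Sem c₂ z y
  | .choose c₁ c₂, x, y => Sem c₁ x y ∨ Sem c₂ x y
  | .loop l c, x, y => ∃ i ≤ x l, iterRel (Sem c) i x y

/-!
On a fixed input a command has only finitely many output stores, and the list of them is a
primitive recursive function of the input: a loop `loop l c` runs its body at most `x l` times,
so unfolding it is a bounded recursion on `x l`. The computed function is the maximum of the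
`j`-th coordinate over this list.
-/

theorem iterRel_succ_right {α : Type*} (R : α → α → Prop) (k : ℕ) (x z : α) :
    iterRel R (k + 1) x z ↔ ∃ y, iterRel R k x y ∧ R y z := by
  induction k generalizing x with
  | zero => simp [iterRel]
  | succ k ih =>
    simp only [iterRel] at ih ⊢
    simp_rw [ih]
    aesop

def reachableWithin {α : Type*} (r : α → List α) (x : α) : ℕ → List α
  | 0 => [x]
  | k + 1 => x :: (reachableWithin r x k).flatMap r

theorem mem_reachableWithin_iff {α : Type*} {R : α → α → Prop} {r : α → List α}
    (hr : ∀ x y, y ∈ r x ↔ R x y) {x y : α} {k : ℕ} :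
    y ∈ reachableWithin r x k ↔ ∃ i ≤ k, iterRel R i x y := by
  induction k generalizing y with
  | zero => simp [reachableWithin, iterRel]
  | succ k ih =>
    simp only [reachableWithin, List.mem_cons, List.mem_flatMap, ih, hr]
    constructor
    · rintro (rfl | ⟨z, ⟨i, hik, hxz⟩, hzy⟩)
      · exact ⟨0, k.zero_le.trans k.le_succ, rfl⟩
      · exact ⟨i + 1, by omega, (iterRel_succ_right R i x y).2 ⟨z, hxz, hzy⟩⟩
    · rintro ⟨_ | i, hik, hxy⟩
      · exact .inl hxy
      · obtain ⟨z, hxz, hzy⟩ := (iterRel_succ_right R i x y).1 hxy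
        exact .inr ⟨z, ⟨i, by omega, hxz⟩, hzy⟩

theorem Primrec.reachableWithin {α : Type*} [Primcodable α] {r : α → List α}
    (hr : Primrec r) : Primrec₂ (reachableWithin r) := by
  have hrec := Primrec.nat_rec' Primrec.snd (Primrec.list_cons.comp Primrec.fst (.const []))
    (h := fun p q => p.1 :: q.2.flatMap r)
    (Primrec.list_cons.comp (Primrec.fst.comp Primrec.fst)
      (Primrec.list_flatMap (Primrec.snd.comp Primrec.snd) (hr.comp Primrec.snd).to₂)).to₂
  refine hrec.of_eq fun ⟨x, k⟩ => ?_
  induction k with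
  | zero => rfl
  | succ k ih => exact congrArg (fun l => x :: l.flatMap r) ih

theorem IsGreatest.eq_foldr_max {α : Type*} [LinearOrder α] [OrderBot α] {s : Set α} {a : α}
    {l : List α} (h : IsGreatest s a) (hl : ∀ x, x ∈ l ↔ x ∈ s) : a = l.foldr max ⊥ :=
  le_antisymm (List.le_max_of_le ((hl a).2 h.1) le_rfl)
    (List.max_le_of_forall_le l a fun x hx => h.2 ((hl x).1 hx))

theorem Primrec.update_finArrow {α σ : Type*} [Primcodable α] [Primcodable σ] {n : ℕ}
    {f : α → Fin n → σ} {g : α → σ} (hf : Primrec f) (hg : Primrec g) (l : Fin n) :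
    Primrec fun a => Function.update (f a) l (g a) := by
  refine Primrec.fin_curry.2 <| (Primrec.ite (Primrec.eq.comp Primrec.snd (.const l))
    (hg.comp Primrec.fst) (Primrec.fin_app.comp (hf.comp Primrec.fst) Primrec.snd)).of_eq
    fun _ => (Function.update_apply ..).symm

theorem Expr.primrec_eval {n : ℕ} (e : Expr n) : Primrec e.eval := by
  have get (i : Fin n) : Primrec fun x : Fin n → ℕ => x i :=
    Primrec.fin_app.comp .id (.const i)
  cases e with
  | zero => exact .const 0
  | var i => exact get i
  | add i j => exact Primrec.nat_add.comp (get i) (get j)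
  | mul i j => exact Primrec.nat_mul.comp (get i) (get j)

namespace Cmd

variable {n : ℕ}

def run : Cmd n → (Fin n → ℕ) → List (Fin n → ℕ)
  | .skip, x => [x]
  | .assign l e, x => [Function.update x l (e.eval x)]
  | .seq c₁ c₂, x => (run c₁ x).flatMap (run c₂)
  | .choose c₁ c₂, x => run c₁ x ++ run c₂ x
  | .loop l c, x => reachableWithin (run c) x (x l)

theorem mem_run_iff (C : Cmd n) {x y : Fin n → ℕ} : y ∈ C.run x ↔ Sem C x y := by
  induction C generalizing x y with
  | skip | assign => simp [run, Sem]
  | seq _ _ ih₁ ih₂ | choose _ _ ih₁ ih₂ => simp [run, Sem, ih₁, ih₂]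
  | loop l c ih => exact mem_reachableWithin_iff fun _ _ => ih

theorem primrec_run (C : Cmd n) : Primrec C.run := by
  induction C with
  | skip => exact Primrec.list_cons.comp .id (.const [])
  | assign l e =>
    exact Primrec.list_cons.comp (Primrec.update_finArrow .id e.primrec_eval l) (.const [])
  | seq c₁ c₂ ih₁ ih₂ => exact Primrec.list_flatMap ih₁ (ih₂.comp Primrec.snd).to₂
  | choose c₁ c₂ ih₁ ih₂ => exact Primrec.list_append.comp ih₁ ih₂
  | loop l c ih => exact (Primrec.reachableWithin ih).comp .id (Primrec.fin_app.comp .id (.const l))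

end Cmd

/-- every function computable by a core-language command — i.e.
mapping an input store to the maximum value of a fixed output coordinate
over all reachable output stores — is primitive recursive. -/
theorem core_computable_primrec {n : ℕ} (C : Cmd n) (j : Fin n)
    (f : (Fin n → ℕ) → ℕ)
    (hf : ∀ x : Fin n → ℕ, IsGreatest {m : ℕ | ∃ y, Sem C x y ∧ y j = m} (f x)) :
    Nat.Primrec' (fun v : List.Vector ℕ n => f v.get) := by
  have hmax (x : Fin n → ℕ) : f x = ((C.run x).map (· j)).foldr max ⊥ :=
    (hf x).eq_foldr_max fun m => by simp [Cmd.mem_run_iff]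
  have hprim : Primrec fun x => ((C.run x).map (· j)).foldr max ⊥ :=
    Primrec.list_foldr
      (Primrec.list_map C.primrec_run (Primrec.fin_app.comp Primrec.snd (.const j)).to₂)
      (.const ⊥)
      (Primrec.nat_max.comp (Primrec.fst.comp Primrec.snd) (Primrec.snd.comp Primrec.snd)).to₂
  exact .of_prim ((hprim.comp .vector_get').of_eq fun v => (hmax v.get).symm)
end

section
/- For the command C = 'loop X_4 { X_3 := X_1+X_2; choose {X_1 := X_3} or {X_2 := X_3} }', the outputs are not polynomially bounded: for every polynomial p there exist inputs x and a reachable output y with x ⟦C⟧ y and y_1 > p(x_1, x_2, x_3, x_4). Concretely, starting from x_1 = x_2 = 1, after 2k iterations a value of at least 2^k is reachable in X_1. -/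
/-- `loop X₄ { X₃ := X₁+X₂; choose {X₁ := X₃} or {X₂ := X₃} }`
(variables `X₁,…,X₄` are indices `0,…,3`). -/
def expCmd : Cmd 4 :=
  Cmd.loop 3 (Cmd.seq (Cmd.assign 2 (Expr.add 0 1))
    (Cmd.choose (Cmd.assign 0 (Expr.var 2)) (Cmd.assign 1 (Expr.var 2))))

/-!
Taking first the second and then the first branch of the loop body sends `(X₁, X₂) = (a, b)`
to `(2a + b, a + b)`, so both coordinates at least double every two iterations and `X₁`
reaches `2^k` after `2k` iterations from `(1, 1)`. A polynomial with natural coefficients is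
at most `C * N^d` on inputs bounded by `N ≥ 1`, and `C * (2k)^d < 2^k` for large `k`.
-/

theorem iterRel_add {α : Type*} {R : α → α → Prop} {m n : ℕ} {x y z : α}
    (h₁ : iterRel R m x y) (h₂ : iterRel R n y z) : iterRel R (m + n) x z := by
  induction m generalizing x with
  | zero => cases h₁; rwa [Nat.zero_add]
  | succ m ih =>
    obtain ⟨x', hxx', h₁⟩ := h₁
    rw [Nat.succ_add]
    exact ⟨x', hxx', ih h₁⟩

def expBody : Cmd 4 :=
  Cmd.seq (Cmd.assign 2 (Expr.add 0 1))
    (Cmd.choose (Cmd.assign 0 (Expr.var 2)) (Cmd.assign 1 (Expr.var 2)))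

theorem sem_expBody_left (a b c m : ℕ) : Sem expBody ![a, b, c, m] ![a + b, b, a + b, m] := by
  refine ⟨![a, b, a + b, m], ?_, Or.inl ?_⟩ <;>
  · funext i; fin_cases i <;> simp [Expr.eval]

theorem sem_expBody_right (a b c m : ℕ) : Sem expBody ![a, b, c, m] ![a, a + b, a + b, m] := by
  refine ⟨![a, b, a + b, m], ?_, Or.inr ?_⟩ <;>
  · funext i; fin_cases i <;> simp [Expr.eval]

theorem iterRel_expBody_two (a b c m : ℕ) :
    iterRel (Sem expBody) 2 ![a, b, c, m] ![2 * a + b, a + b, 2 * a + b, m] := by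
  have hleft := sem_expBody_left a (a + b) (a + b) m
  rw [show a + (a + b) = 2 * a + b by ring] at hleft
  exact ⟨_, sem_expBody_right a b c m, _, hleft, rfl⟩

theorem exists_iterRel_expBody_two_pow_le (m k : ℕ) : ∃ a b c : ℕ,
    iterRel (Sem expBody) (2 * k) ![1, 1, 0, m] ![a, b, c, m] ∧ 2 ^ k ≤ a ∧ 2 ^ k ≤ b := by
  induction k with
  | zero => exact ⟨1, 1, 0, rfl, le_rfl, le_rfl⟩
  | succ k ih =>
    obtain ⟨a, b, c, hiter, ha, hb⟩ := ih
    refine ⟨2 * a + b, a + b, 2 * a + b, iterRel_add hiter (iterRel_expBody_two a b c m), ?_, ?_⟩ <;>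
    · rw [pow_succ]; omega

theorem exists_sem_expCmd_two_pow_le (k : ℕ) :
    ∃ y : Fin 4 → ℕ, Sem expCmd ![1, 1, 0, 2 * k] y ∧ 2 ^ k ≤ y 0 := by
  obtain ⟨a, b, c, hiter, ha, -⟩ := exists_iterRel_expBody_two_pow_le (2 * k) k
  exact ⟨![a, b, c, 2 * k], ⟨2 * k, le_rfl, hiter⟩, ha⟩

theorem MvPolynomial.exists_eval_le_mul_pow {σ : Type*} (p : MvPolynomial σ ℕ) :
    ∃ C d : ℕ, ∀ (x : σ → ℕ) (N : ℕ), 1 ≤ N → (∀ i, x i ≤ N) → eval x p ≤ C * N ^ d := by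
  induction p using MvPolynomial.induction_on with
  | C a => exact ⟨a, 0, fun x N _ _ => by simp⟩
  | add p q hp hq =>
    obtain ⟨C₁, d₁, hp⟩ := hp
    obtain ⟨C₂, d₂, hq⟩ := hq
    refine ⟨C₁ + C₂, max d₁ d₂, fun x N hN hx => ?_⟩
    have hd₁ : N ^ d₁ ≤ N ^ max d₁ d₂ := Nat.pow_le_pow_right hN (le_max_left _ _)
    have hd₂ : N ^ d₂ ≤ N ^ max d₁ d₂ := Nat.pow_le_pow_right hN (le_max_right _ _)
    calc eval x (p + q) = eval x p + eval x q := map_add _ _ _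
      _ ≤ C₁ * N ^ max d₁ d₂ + C₂ * N ^ max d₁ d₂ := by
        gcongr
        · exact (hp x N hN hx).trans (Nat.mul_le_mul_left _ hd₁)
        · exact (hq x N hN hx).trans (Nat.mul_le_mul_left _ hd₂)
      _ = (C₁ + C₂) * N ^ max d₁ d₂ := by ring
  | mul_X p i hp =>
    obtain ⟨C, d, hp⟩ := hp
    refine ⟨C, d + 1, fun x N hN hx => ?_⟩
    calc eval x (p * X i) = eval x p * x i := by rw [map_mul, eval_X]
      _ ≤ C * N ^ d * N := Nat.mul_le_mul (hp x N hN hx) (hx i)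
      _ = C * N ^ (d + 1) := by ring

theorem eventually_mul_pow_lt_two_pow (C d : ℕ) :
    ∀ᶠ n : ℕ in Filter.atTop, C * n ^ d < 2 ^ n := by
  have hlim := tendsto_pow_const_div_const_pow_of_one_lt d (one_lt_two (α := ℝ))
  filter_upwards [hlim.eventually (gt_mem_nhds (by positivity : (0 : ℝ) < 1 / (C + 1)))]
    with n hn
  rw [div_lt_div_iff₀ (by positivity) (by positivity), one_mul] at hn
  have hn' : n ^ d * (C + 1) < 2 ^ n := by exact_mod_cast hn
  nlinarith [Nat.zero_le (n ^ d)]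

/-- the outputs of `expCmd` are not polynomially bounded;
concretely, from `X₁ = X₂ = 1` and `X₄ = 2k`, a value `≥ 2^k` is reachable
in `X₁`. -/
theorem expCmd_not_poly_bounded :
    (∀ p : MvPolynomial (Fin 4) ℕ, ∃ x y : Fin 4 → ℕ,
      Sem expCmd x y ∧ MvPolynomial.eval x p < y 0) ∧
    (∀ k : ℕ, ∃ y : Fin 4 → ℕ,
      Sem expCmd ![1, 1, 0, 2 * k] y ∧ 2 ^ k ≤ y 0) := by
  refine ⟨fun p => ?_, exists_sem_expCmd_two_pow_le⟩
  obtain ⟨C, d, hp⟩ := p.exists_eval_le_mul_pow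
  obtain ⟨k, hk, hk₁⟩ :=
    ((eventually_mul_pow_lt_two_pow (C * 2 ^ d) d).and (Filter.eventually_ge_atTop 1)).exists
  obtain ⟨y, hy, hy₀⟩ := exists_sem_expCmd_two_pow_le k
  have hx : ∀ i, (![1, 1, 0, 2 * k] : Fin 4 → ℕ) i ≤ 2 * k := by
    intro i; fin_cases i <;> simp <;> omega
  refine ⟨_, y, hy, ?_⟩
  calc MvPolynomial.eval ![1, 1, 0, 2 * k] p ≤ C * (2 * k) ^ d := hp _ _ (by omega) hx
    _ = C * 2 ^ d * k ^ d := by rw [mul_pow, mul_assoc]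
    _ < 2 ^ k := hk
    _ ≤ y 0 := hy₀
end

section
/- NFA universality over the binary alphabet {0,1} reduces to the linear-bound analysis problem for the core language with resets: given an NFA A = (Q, {0,1}, δ, q_0, F) with F nonempty, the program P(A) constructed in the paper (simulating subset reachability with zero/nonzero variable values, one variable per state, where X_q = 0 iff q is reachable on the word chosen so far, and a final command Fin multiplying Z by the variables of all accepting states) has its variable Z linearly bounded in the inputs if and only if L(A) = {0,1}*. -/
open Finset

variable {n : ℕ}

/-- One subset-construction step of the NFA with transition relation `δ`. -/
def setStep (δ : Fin n → Fin 2 → Fin n → Bool) (S : Finset (Fin n))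
    (a : Fin 2) : Finset (Fin n) :=
  Finset.univ.filter fun q => ∃ i ∈ S, δ i a q

/-- The set of states of the NFA reachable from `q₀` on the word `w`. -/
def reachSet (δ : Fin n → Fin 2 → Fin n → Bool) (q₀ : Fin n)
    (w : List (Fin 2)) : Finset (Fin n) :=
  w.foldl (setStep δ) {q₀}

/-- The NFA `(Fin n, {0,1}, δ, q₀, F)` accepts the word `w`. -/
def Accepts (δ : Fin n → Fin 2 → Fin n → Bool) (q₀ : Fin n)
    (F : Finset (Fin n)) (w : List (Fin 2)) : Prop :=
  ∃ f ∈ F, f ∈ reachSet δ q₀ w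

/-- One iteration of the loop of the reduction program, choosing letter `a`:
for each state `q`, `X'_q := Z · ∏ (X_i over a-predecessors i of q)`, then the
`X'_q` are copied into the `X_q`; `Z` is unchanged.  The store is the pair of
the state variables `X` and the variable `Z`. -/
def progStep (δ : Fin n → Fin 2 → Fin n → Bool) (a : Fin 2)
    (s : (Fin n → ℕ) × ℕ) : (Fin n → ℕ) × ℕ :=
  (fun q => s.2 * ∏ i ∈ Finset.univ.filter (fun i => δ i a q), s.1 i, s.2)

/-- Executing the loop body once per letter of `w`, starting from the store
obtained from the input `x` by the initial reset `X_{q₀} := 0` (and `Z = z`). -/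
def runLoop (δ : Fin n → Fin 2 → Fin n → Bool) (q₀ : Fin n)
    (x : Fin n → ℕ) (z : ℕ) (w : List (Fin 2)) : (Fin n → ℕ) × ℕ :=
  w.foldl (fun s a => progStep δ a s) (Function.update x q₀ 0, z)

/-- The final value of `Z` after the command `Fin`, which sets
`Z := Z · ∏_{f ∈ F} X_f`. -/
def finOut (δ : Fin n → Fin 2 → Fin n → Bool) (q₀ : Fin n)
    (F : Finset (Fin n)) (x : Fin n → ℕ) (z : ℕ) (w : List (Fin 2)) : ℕ :=
  (runLoop δ q₀ x z w).2 * ∏ f ∈ F, (runLoop δ q₀ x z w).1 f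

/-!
Along the loop, `X_q = 0` for every state `q` reachable on the word read so far: a zero
predecessor annihilates the product. If the inputs and `Z` are all equal to `N ≥ 1`, then
conversely every unreachable state keeps `X_q ≥ N`, since `X'_q = N · ∏ (factors ≥ 1)`. Hence on
an accepted word `Fin` outputs `0`, while on a rejected word it outputs at least `N²`, which no
linear function of the inputs `n N + |w| + N` dominates for large `N`.
-/

section Invariants

variable (δ : Fin n → Fin 2 → Fin n → Bool)

lemma foldl_progStep_snd (w : List (Fin 2)) (s : (Fin n → ℕ) × ℕ) :
    (w.foldl (fun s a => progStep δ a s) s).2 = s.2 := by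
  induction w generalizing s with
  | nil => rfl
  | cons a w ih => exact ih (progStep δ a s)

lemma progStep_eq_zero_of_mem_setStep {S : Finset (Fin n)} {s : (Fin n → ℕ) × ℕ}
    (h : ∀ q ∈ S, s.1 q = 0) (a : Fin 2) :
    ∀ q ∈ setStep δ S a, (progStep δ a s).1 q = 0 := by
  intro q hq
  obtain ⟨i, hiS, hi⟩ := (mem_filter.mp hq).2
  exact mul_eq_zero_of_right _ (prod_eq_zero (mem_filter.mpr ⟨mem_univ i, hi⟩) (h i hiS))

lemma le_progStep_of_not_mem_setStep {S : Finset (Fin n)} {s : (Fin n → ℕ) × ℕ} {N : ℕ}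
    (hN : 1 ≤ N) (hz : s.2 = N) (h : ∀ q ∉ S, N ≤ s.1 q) (a : Fin 2) :
    ∀ q ∉ setStep δ S a, N ≤ (progStep δ a s).1 q := by
  intro q hq
  have hpred : ∀ i ∈ univ.filter (fun i => δ i a q), 1 ≤ s.1 i := fun i hi =>
    hN.trans (h i fun hiS => hq (mem_filter.mpr ⟨mem_univ q, i, hiS, (mem_filter.mp hi).2⟩))
  calc N = N * 1 := (mul_one N).symm
    _ ≤ (progStep δ a s).1 q := by
      rw [progStep, hz]
      exact Nat.mul_le_mul_left N (one_le_prod' hpred)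

lemma foldl_progStep_eq_zero_of_mem {S : Finset (Fin n)} {s : (Fin n → ℕ) × ℕ}
    (h : ∀ q ∈ S, s.1 q = 0) (w : List (Fin 2)) :
    ∀ q ∈ w.foldl (setStep δ) S, (w.foldl (fun s a => progStep δ a s) s).1 q = 0 := by
  induction w generalizing s S with
  | nil => exact h
  | cons a w ih => exact ih (progStep_eq_zero_of_mem_setStep δ h a)

lemma le_foldl_progStep_of_not_mem {S : Finset (Fin n)} {s : (Fin n → ℕ) × ℕ} {N : ℕ}
    (hN : 1 ≤ N) (hz : s.2 = N) (h : ∀ q ∉ S, N ≤ s.1 q) (w : List (Fin 2)) :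
    ∀ q ∉ w.foldl (setStep δ) S, N ≤ (w.foldl (fun s a => progStep δ a s) s).1 q := by
  induction w generalizing s S with
  | nil => exact h
  | cons a w ih => exact ih hz (le_progStep_of_not_mem_setStep δ hN hz h a)

end Invariants

section Run

variable (δ : Fin n → Fin 2 → Fin n → Bool) (q₀ : Fin n)

lemma runLoop_snd (x : Fin n → ℕ) (z : ℕ) (w : List (Fin 2)) : (runLoop δ q₀ x z w).2 = z :=
  foldl_progStep_snd δ w _

lemma runLoop_eq_zero_of_mem_reachSet (x : Fin n → ℕ) (z : ℕ) {w : List (Fin 2)} {q : Fin n}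
    (hq : q ∈ reachSet δ q₀ w) : (runLoop δ q₀ x z w).1 q = 0 :=
  foldl_progStep_eq_zero_of_mem δ (fun q hq => by simp [mem_singleton.mp hq]) w q hq

lemma le_runLoop_of_not_mem_reachSet {N : ℕ} (hN : 1 ≤ N) {w : List (Fin 2)} {q : Fin n}
    (hq : q ∉ reachSet δ q₀ w) : N ≤ (runLoop δ q₀ (fun _ => N) N w).1 q :=
  le_foldl_progStep_of_not_mem δ hN rfl
    (fun q hq => by simp [Function.update_of_ne (notMem_singleton.mp hq)]) w q hq

lemma finOut_eq_zero_of_accepts {F : Finset (Fin n)} (x : Fin n → ℕ) (z : ℕ)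
    {w : List (Fin 2)} (h : Accepts δ q₀ F w) : finOut δ q₀ F x z w = 0 := by
  obtain ⟨f, hfF, hf⟩ := h
  exact mul_eq_zero_of_right _ (prod_eq_zero hfF (runLoop_eq_zero_of_mem_reachSet δ q₀ x z hf))

lemma mul_self_le_finOut_of_not_accepts {F : Finset (Fin n)} (hF : F.Nonempty) {N : ℕ}
    (hN : 1 ≤ N) {w : List (Fin 2)} (h : ¬Accepts δ q₀ F w) :
    N * N ≤ finOut δ q₀ F (fun _ => N) N w := by
  have hX : ∀ f ∈ F, N ≤ (runLoop δ q₀ (fun _ => N) N w).1 f := fun f hf =>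
    le_runLoop_of_not_mem_reachSet δ q₀ hN fun hr => h ⟨f, hf, hr⟩
  obtain ⟨f, hf⟩ := hF
  rw [finOut, runLoop_snd]
  refine Nat.mul_le_mul_left N ((hX f hf).trans (single_le_prod' (fun g hg => ?_) hf))
  exact hN.trans (hX g hg)

end Run

lemma exists_linear_lt_mul_self (a b : ℕ) : ∃ N, 1 ≤ N ∧ a * N + b < N * N :=
  ⟨a + b + 1, by omega, by nlinarith⟩

/-- `Z` is linearly bounded in the inputs (over all runs of the
program `P(A)`, i.e. all words `w` of length at most the loop bound `y`)
if and only if the NFA `A` is universal. -/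
theorem linear_bound_iff_universal
    (δ : Fin n → Fin 2 → Fin n → Bool) (q₀ : Fin n) (F : Finset (Fin n))
    (hF : F.Nonempty) :
    (∃ c d : ℕ, ∀ (x : Fin n → ℕ) (y z : ℕ) (w : List (Fin 2)),
        w.length ≤ y →
        finOut δ q₀ F x z w ≤ c * ((∑ i, x i) + y + z) + d) ↔
    (∀ w : List (Fin 2), Accepts δ q₀ F w) := by
  constructor
  · rintro ⟨c, d, hbound⟩ w
    by_contra hw
    obtain ⟨N, hN, hlt⟩ := exists_linear_lt_mul_self (c * (n + 1)) (c * w.length + d)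
    have hupper := hbound (fun _ => N) w.length N w le_rfl
    have hlower := mul_self_le_finOut_of_not_accepts δ q₀ hF hN hw
    simp only [sum_const, card_univ, Fintype.card_fin, smul_eq_mul] at hupper
    nlinarith
  · intro huniv
    refine ⟨0, 0, fun x _ z w _ => ?_⟩
    simp [finOut_eq_zero_of_accepts δ q₀ x z (huniv w)]
end

section
/- The gadget 'X_1 := Z; X_2 := Z; loop Y { Z := X_1; X_1 := X_2+1; X_2 := Z }' computes halved linear growth: if the loop executes exactly k iterations starting from Z = z, the final value of Z is z + ⌊k/2⌋; hence over all nondeterministic runs the maximal final value of Z is z + ⌊y/2⌋ where y is the initial value of Y. -/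
/-- One iteration of the body `Z := X₁; X₁ := X₂+1; X₂ := Z` on the store
`(Z, X₁, X₂)`. -/
def halfStep (s : ℕ × ℕ × ℕ) : ℕ × ℕ × ℕ :=
  (s.2.1, s.2.2 + 1, s.2.1)

lemma halfStep_closed (z k : ℕ) :
    halfStep^[k] (z, z, z) = (z + k / 2, z + (k + 1) / 2, z + k / 2) := by
  induction k with
  | zero => simp
  | succ n ih =>
    rw [Function.iterate_succ_apply', ih, halfStep]
    simp only [halfStep, Prod.mk.injEq]
    exact ⟨trivial, by omega, trivial⟩

/-- in the gadget
`X₁ := Z; X₂ := Z; loop Y { Z := X₁; X₁ := X₂+1; X₂ := Z }`,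
after exactly `k` iterations the value of `Z` is `z + ⌊k/2⌋`; hence the
maximal final value of `Z` over all nondeterministic runs (any number of
iterations `k ≤ y`) is `z + ⌊y/2⌋`. -/
theorem half_gadget (z y : ℕ) :
    (∀ k : ℕ, (halfStep^[k] (z, z, z)).1 = z + k / 2) ∧
    IsGreatest {v : ℕ | ∃ k ≤ y, (halfStep^[k] (z, z, z)).1 = v} (z + y / 2) := by
  have h : ∀ k : ℕ, (halfStep^[k] (z, z, z)).1 = z + k / 2 := by
    intro k; rw [halfStep_closed]
  refine ⟨h, ⟨y, le_refl y, h y⟩, ?_⟩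
  rintro v ⟨k, hk, rfl⟩
  rw [h k]; omega
end

section
/- For the loop L = 'X_2:=0; loop X_3 { X_1 := X_2*X_1; X_2 := X_1 }': starting from any store, after executing the reset X_2:=0, one iteration of the loop body sets X_1 to 0 and X_2 to 0; hence all reachable final values of X_1 and X_2 after the full command are bounded by the initial values max(x_1, x_2·x_1) — in particular the command is polynomially bounded, even though the loop body alone (started with X_2 = X_1 = c ≥ 2) can produce X_1 ≥ c^(2^(k-1)) after k ≥ 1 iterations. -/
/-- One iteration of the loop body `X₁ := X₂*X₁; X₂ := X₁` on `(X₁, X₂)`. -/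
def sqStep (s : ℕ × ℕ) : ℕ × ℕ :=
  (s.2 * s.1, s.2 * s.1)

lemma sqStep_zero (k : ℕ) : sqStep^[k] (0, 0) = (0, 0) := by
  induction k with
  | zero => rfl
  | succ n ih => rw [Function.iterate_succ_apply, show sqStep (0,0) = (0,0) from rfl, ih]

lemma sqStep_pow (c k : ℕ) : sqStep^[k] (c, c) = (c ^ 2 ^ k, c ^ 2 ^ k) := by
  induction k with
  | zero => simp
  | succ n ih =>
      rw [Function.iterate_succ_apply', ih]
      simp [sqStep, ← pow_add, pow_succ, two_mul, mul_comm]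

/-- for `L = X₂:=0; loop X₃ { X₁ := X₂*X₁; X₂ := X₁ }`:
after the reset, one body iteration zeroes both variables, so all reachable
final values of `X₁, X₂` (any `k ≤ x₃` iterations) are bounded by
`max(x₁, x₂·x₁)`; yet the body alone, started from `X₁ = X₂ = c ≥ 2`,
produces `X₁ ≥ c^(2^(k-1))` after `k ≥ 1` iterations. -/
theorem reset_tames_squaring :
    (∀ x₁ : ℕ, sqStep (x₁, 0) = (0, 0)) ∧
    (∀ x₁ x₂ x₃ k : ℕ, k ≤ x₃ →
      (sqStep^[k] (x₁, 0)).1 ≤ max x₁ (x₂ * x₁) ∧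
      (sqStep^[k] (x₁, 0)).2 ≤ max x₁ (x₂ * x₁)) ∧
    (∀ c k : ℕ, 2 ≤ c → 1 ≤ k →
      c ^ 2 ^ (k - 1) ≤ (sqStep^[k] (c, c)).1) := by
  refine ⟨fun x₁ => by simp [sqStep], ?_, ?_⟩
  · intro x₁ x₂ x₃ k _
    cases k with
    | zero => simp
    | succ n =>
        rw [Function.iterate_succ_apply, show sqStep (x₁,0) = (0,0) from by simp [sqStep],
          sqStep_zero]
        simp
  · intro c k hc hk
    rw [sqStep_pow]
    exact Nat.pow_le_pow_right (by omega)
      (Nat.pow_le_pow_right (by norm_num) (Nat.sub_le k 1))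
end

section
/- Exact-semantics loops destroy monotonicity: there exists a command C in the language with assignments X:=Y and exact loops (loops that always perform exactly the number of iterations given by the loop variable) whose denoted function is not monotone in the loop variable, e.g., for C over variables X_1, X_2, X_3 given by 'loop X_3 { Z := X_1; X_1 := X_2; X_2 := Z }' (swap), the final value of X_1 as a function of x_3 is not monotone (it alternates between x_1 and x_2 for x_1 ≠ x_2). -/
/-- One iteration of the swap body `Z := X₁; X₁ := X₂; X₂ := Z` on `(X₁, X₂)`. -/
def swapStep (p : ℕ × ℕ) : ℕ × ℕ :=
  (p.2, p.1)

lemma swap_iter (x₁ x₂ k : ℕ) :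
    swapStep^[k] (x₁, x₂) = if k % 2 = 0 then (x₁, x₂) else (x₂, x₁) := by
  induction k with
  | zero => simp
  | succ n ih =>
    rw [Function.iterate_succ_apply', ih]
    rcases Nat.even_or_odd n with h | h
    · simp [Nat.even_iff.mp h, Nat.succ_mod_two_eq_one_iff.mpr (Nat.even_iff.mp h), swapStep]
    · simp [Nat.odd_iff.mp h, Nat.succ_mod_two_eq_zero_iff.mpr (Nat.odd_iff.mp h), swapStep]

/-- exact-semantics loops destroy monotonicity: for the exact
loop `loop X₃ { Z := X₁; X₁ := X₂; X₂ := Z }`, the final value of `X₁` after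
exactly `x₃` iterations is `x₁` for even `x₃` and `x₂` for odd `x₃`, which is
not a monotone function of the loop variable `x₃` whenever `x₁ ≠ x₂`. -/
theorem exact_loop_not_monotone :
    (∀ x₁ x₂ k : ℕ,
      (swapStep^[k] (x₁, x₂)).1 = if k % 2 = 0 then x₁ else x₂) ∧
    (∀ x₁ x₂ : ℕ, x₁ ≠ x₂ →
      ¬ Monotone fun k : ℕ => (swapStep^[k] (x₁, x₂)).1) := by
  have key : ∀ x₁ x₂ k : ℕ,
      (swapStep^[k] (x₁, x₂)).1 = if k % 2 = 0 then x₁ else x₂ := by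
    intro x₁ x₂ k
    rw [swap_iter]
    split <;> rfl
  refine ⟨key, fun x₁ x₂ h hm => ?_⟩
  rcases lt_or_gt_of_ne h with hlt | hlt
  · have h1 := hm (show (1:ℕ) ≤ 2 by norm_num)
    simp only [key] at h1
    norm_num at h1
    omega
  · have h1 := hm (show (0:ℕ) ≤ 1 by norm_num)
    simp only [key] at h1
    norm_num at h1
    omega
end

section
/- Iterating a multiplicative self-dependence yields exponential growth: if a relation R on ℕ^n satisfies, for all a, existence of a transition from any store x with x_i = a to some store y with y_i ≥ 2a, while preserving the ℓ-th coordinate, then the bounded loop over R can produce, from input with x_i = 1 and x_ℓ = k, an output with value at least 2^k in coordinate i; hence no polynomial in the inputs bounds the output as k varies. -/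
lemma nat_poly_lt_two_pow (q : Polynomial ℕ) : ∃ k, 1 ≤ k ∧ q.eval k < 2 ^ k := by
  set d := q.natDegree with hd
  set C := ∑ m ∈ Finset.range (d + 1), q.coeff m with hC
  have hbound : ∀ k : ℕ, 1 ≤ k → q.eval k ≤ C * k ^ d := by
    intro k hk
    rw [Polynomial.eval_eq_sum_range]
    rw [hC, Finset.sum_mul]
    apply Finset.sum_le_sum
    intro m hm
    have hmd : m ≤ d := Nat.lt_succ_iff.mp (Finset.mem_range.mp hm)
    exact Nat.mul_le_mul_left _ (Nat.pow_le_pow_right hk hmd)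
  -- find k with C * k ^ d < 2 ^ k
  have hlo : (fun k : ℕ => (C : ℝ) * (k : ℝ) ^ d) =o[Filter.atTop]
      (fun k : ℕ => (2 : ℝ) ^ k) := by
    exact (isLittleO_pow_const_const_pow_of_one_lt d (by norm_num : (1:ℝ) < 2)).const_mul_left _
  have := hlo.def (by norm_num : (0:ℝ) < 1/2)
  rw [Filter.eventually_atTop] at this
  obtain ⟨N, hN⟩ := this
  refine ⟨max N 1, le_max_right _ _, ?_⟩
  have h1 := hN (max N 1) (le_max_left _ _)
  simp only [Real.norm_eq_abs] at h1
  have h2 : (C : ℝ) * (max N 1 : ℕ) ^ d < 2 ^ (max N 1) := by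
    have ha : |(C : ℝ) * (max N 1 : ℕ) ^ d| = (C : ℝ) * (max N 1 : ℕ) ^ d := by
      apply abs_of_nonneg; positivity
    have hb : |(2:ℝ) ^ (max N 1)| = (2:ℝ) ^ (max N 1) := by
      apply abs_of_nonneg; positivity
    rw [ha, hb] at h1
    calc (C : ℝ) * (max N 1 : ℕ) ^ d ≤ 1/2 * 2 ^ (max N 1) := h1
      _ < 2 ^ (max N 1) := by
          have : (0:ℝ) < 2 ^ (max N 1) := by positivity
          linarith
  have h3 : C * (max N 1) ^ d < 2 ^ (max N 1) := by exact_mod_cast h2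
  exact lt_of_le_of_lt (hbound _ (le_max_right _ _)) h3

/-- if from every store the relation `R` can at least double
coordinate `i` while preserving the loop coordinate `ℓ`, then the bounded
loop over `R` reaches a value `≥ 2^k` in coordinate `i` from any input with
`xᵢ = 1` and `x_ℓ = k`; hence no polynomial in the inputs bounds the output. -/
theorem loop_correction_exponential {n : ℕ} (i ℓ : Fin n)
    (R : (Fin n → ℕ) → (Fin n → ℕ) → Prop)
    (hinv : ∀ x y, R x y → y ℓ = x ℓ)
    (hdouble : ∀ x : Fin n → ℕ, ∃ y, R x y ∧ 2 * x i ≤ y i ∧ y ℓ = x ℓ) :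
    (∀ (k : ℕ) (x : Fin n → ℕ), x i = 1 → x ℓ = k →
      ∃ y : Fin n → ℕ, (∃ j ≤ x ℓ, iterRel R j x y) ∧ 2 ^ k ≤ y i) ∧
    ¬ ∃ p : MvPolynomial (Fin n) ℕ, ∀ x y : Fin n → ℕ,
        (∃ j ≤ x ℓ, iterRel R j x y) → y i ≤ MvPolynomial.eval x p := by
  have grow : ∀ (j : ℕ) (x : Fin n → ℕ),
      ∃ y, iterRel R j x y ∧ 2 ^ j * x i ≤ y i ∧ y ℓ = x ℓ := by
    intro j
    induction j with
    | zero => intro x; exact ⟨x, rfl, by simp, rfl⟩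
    | succ j ih =>
        intro x
        obtain ⟨y, hRy, hy2, hyl⟩ := hdouble x
        obtain ⟨z, hz, hz2, hzl⟩ := ih y
        refine ⟨z, ⟨y, hRy, hz⟩, ?_, hzl.trans hyl⟩
        calc 2 ^ (j+1) * x i = 2 ^ j * (2 * x i) := by ring
          _ ≤ 2 ^ j * y i := Nat.mul_le_mul_left _ hy2
          _ ≤ z i := hz2
  constructor
  · intro k x hxi hxl
    obtain ⟨y, hy, hy2, _⟩ := grow k x
    exact ⟨y, ⟨k, le_of_eq hxl.symm, hy⟩, by simpa [hxi] using hy2⟩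
  · rintro ⟨p, hp⟩
    -- compose p with the substitution m ↦ if m = ℓ then X else 1
    set q : Polynomial ℕ :=
      MvPolynomial.eval₂ Polynomial.C (fun m => if m = ℓ then Polynomial.X else 1) p with hq
    obtain ⟨k, hk1, hk⟩ := nat_poly_lt_two_pow q
    set x : Fin n → ℕ := fun m => if m = ℓ then k else 1 with hx
    have hxl : x ℓ = k := by simp [hx]
    have hxi : 1 ≤ x i := by
      by_cases h : i = ℓ <;> simp [hx, h, hk1]
    obtain ⟨y, hy, hy2, _⟩ := grow k x
    have hyb := hp x y ⟨k, le_of_eq hxl.symm, hy⟩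
    have heval : MvPolynomial.eval x p = q.eval k := by
      have h := MvPolynomial.eval₂_comp_left (Polynomial.evalRingHom k) Polynomial.C
        (fun m => if m = ℓ then Polynomial.X else 1) p
      show _ = (Polynomial.evalRingHom k) q
      have hf : (Polynomial.evalRingHom k).comp Polynomial.C = RingHom.id ℕ :=
        Subsingleton.elim _ _
      have hg : ((Polynomial.evalRingHom k) ∘ fun m => if m = ℓ then Polynomial.X else 1) = x := by
        funext m; by_cases h : m = ℓ <;> simp [h, hx]
      rw [hq, h, hf, hg]
      rfl
    have h2k : 2 ^ k ≤ y i :=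
      le_trans (by calc 2 ^ k = 2 ^ k * 1 := (mul_one _).symm
                    _ ≤ 2 ^ k * x i := Nat.mul_le_mul_left _ hxi) hy2
    rw [heval] at hyb
    exact absurd (le_trans h2k hyb) (not_le.mpr hk)
end
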